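/- arXiv:astro-ph/9901024 — 5 statements merged into one kernel-verified Lean document; each statement's English description precedes it below -/
import Mathlib

section
/- Let ξ: ℝ → ℝ be a nonconstant C² solution of ξ'' + β·ξ' - sin(2ξ) = 0 with β > 0. If ξ(s₀) = m·π for some integer m and some s₀ ∈ ℝ, then ξ'(s)² > ξ'(s₀)² for all s < s₀. -/
/-!
The energy `E = ξ'² / 2 - sin² ξ` decreases along solutions, with `E' = -β ξ'²`, and at a
zero of `sin ξ` it equals `ξ'² / 2`. If `ξ'(s)² ≤ ξ'(s₀)²` for some `s < s₀`, then
`E(s) ≤ ξ'(s)² / 2 ≤ E(s₀)`, so `E` is constant on `[s, s₀]` and `ξ'` vanishes there.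
Then `(ξ, ξ')(s₀) = (mπ, 0)` is an equilibrium, and uniqueness for the Lipschitz first-order
system forces `ξ` to be constant.
-/

open Real Set Topology

namespace DampedSineEquation

noncomputable def energy (x v : ℝ) : ℝ := v ^ 2 / 2 - sin x ^ 2

theorem hasDerivAt_energy {β t : ℝ} {ξ ξ' : ℝ → ℝ} (hξ : HasDerivAt ξ (ξ' t) t)
    (hξ' : HasDerivAt ξ' (sin (2 * ξ t) - β * ξ' t) t) :
    HasDerivAt (fun t ↦ energy (ξ t) (ξ' t)) (-(β * ξ' t ^ 2)) t := by
  have h : HasDerivAt (fun t ↦ energy (ξ t) (ξ' t)) _ t :=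
    ((hξ'.pow 2).div_const 2).sub (hξ.sin.pow 2)
  convert h using 1
  rw [sin_two_mul]
  ring

theorem eqOn_zero_of_hasDerivAt_neg_mul_sq {β a b : ℝ} {E g : ℝ → ℝ} (hβ : 0 < β)
    (hE : ∀ t, HasDerivAt E (-(β * g t ^ 2)) t) (hab : E a ≤ E b) :
    EqOn g 0 (Ioo a b) := by
  have hanti : Antitone E :=
    antitone_of_hasDerivAt_nonpos hE fun t ↦ neg_nonpos.mpr (by positivity)
  intro t ht
  have hconst : E =ᶠ[𝓝 t] fun _ ↦ E a := by
    filter_upwards [Ioo_mem_nhds ht.1 ht.2] with u hu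
    exact le_antisymm (hanti hu.1.le) (hab.trans (hanti hu.2.le))
  have hzero : -(β * g t ^ 2) = 0 :=
    (hE t).unique ((hasDerivAt_const t (E a)).congr_of_eventuallyEq hconst)
  simpa [hβ.ne'] using hzero

theorem eq_const_of_equilibrium {f : ℝ → ℝ} {K : NNReal} (hf : LipschitzWith K f) (β : ℝ)
    {ξ ξ' : ℝ → ℝ} (hξ : ∀ t, HasDerivAt ξ (ξ' t) t)
    (hξ' : ∀ t, HasDerivAt ξ' (f (ξ t) - β * ξ' t) t) {t₀ : ℝ} (hv : ξ' t₀ = 0)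
    (hf₀ : f (ξ t₀) = 0) :
    ξ = fun _ ↦ ξ t₀ := by
  let v : ℝ → ℝ × ℝ → ℝ × ℝ := fun _ p ↦ (p.2, f p.1 - β * p.2)
  have hv_lip : ∀ t, LipschitzOnWith _ (v t) univ := fun _ ↦
    (LipschitzWith.prod_snd.prodMk ((hf.comp LipschitzWith.prod_fst).sub
      ((lipschitzWith_smul β).comp LipschitzWith.prod_snd))).lipschitzOnWith
  have hsol : ∀ t, HasDerivAt (fun t ↦ (ξ t, ξ' t)) (v t (ξ t, ξ' t)) t :=
    fun t ↦ (hξ t).prodMk (hξ' t)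
  have hequil : ∀ t, HasDerivAt (fun _ ↦ (ξ t₀, (0 : ℝ))) (v t (ξ t₀, 0)) t := fun t ↦ by
    rw [show v t (ξ t₀, 0) = 0 by simp [v, hf₀]]
    exact hasDerivAt_const t _
  have h := ODE_solution_unique_univ hv_lip (fun t ↦ ⟨hsol t, mem_univ _⟩)
    (fun t ↦ ⟨hequil t, mem_univ _⟩) (t₀ := t₀) (by simp [hv])
  exact funext fun t ↦ congrArg Prod.fst (congrFun h t)

end DampedSineEquation

open DampedSineEquation

/-- For a nonconstant C² solution of ξ'' + β·ξ' - sin(2ξ) = 0 with β > 0,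
if ξ(s₀) = mπ then ξ'(s)² > ξ'(s₀)² for all s < s₀. -/
theorem stmt_1 (β : ℝ) (hβ : 0 < β) (ξ : ℝ → ℝ) (hξ : ContDiff ℝ 2 ξ)
    (hode : ∀ s, deriv (deriv ξ) s + β * deriv ξ s - Real.sin (2 * ξ s) = 0)
    (hnc : ¬ ∃ c : ℝ, ∀ s, ξ s = c)
    (m : ℤ) (s₀ : ℝ) (hm : ξ s₀ = m * Real.pi) :
    ∀ s < s₀, (deriv ξ s)^2 > (deriv ξ s₀)^2 := by
  intro s hs
  by_contra! hle
  have hξ₁ : ∀ t, HasDerivAt ξ (deriv ξ t) t :=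
    fun t ↦ (hξ.differentiable (by norm_num) t).hasDerivAt
  have hd : Differentiable ℝ (deriv ξ) :=
    ((contDiff_succ_iff_deriv (n := 1)).mp hξ).2.2.differentiable one_ne_zero
  have hξ₂ : ∀ t, HasDerivAt (deriv ξ) (sin (2 * ξ t) - β * deriv ξ t) t := fun t ↦ by
    rw [show sin (2 * ξ t) - β * deriv ξ t = deriv (deriv ξ) t by linarith [hode t]]
    exact (hd t).hasDerivAt
  have hE_le : energy (ξ s) (deriv ξ s) ≤ energy (ξ s₀) (deriv ξ s₀) := by
    simp only [energy, hm, sin_int_mul_pi]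
    nlinarith [sq_nonneg (sin (ξ s))]
  have hzero :=
    eqOn_zero_of_hasDerivAt_neg_mul_sq hβ (fun t ↦ hasDerivAt_energy (hξ₁ t) (hξ₂ t)) hE_le
  have hv₀ : deriv ξ s₀ = 0 :=
    hzero.closure (hξ.continuous_deriv (by norm_num)) continuous_const
      (by rw [closure_Ioo hs.ne]; exact right_mem_Icc.mpr hs.le)
  have hsin₀ : sin (2 * ξ s₀) = 0 := by
    rw [hm, ← mul_assoc]
    exact_mod_cast sin_int_mul_pi (2 * m)
  exact hnc ⟨ξ s₀, congrFun (eq_const_of_equilibrium (lipschitzWith_sin.comp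
    (lipschitzWith_smul (2 : ℝ))) β hξ₁ hξ₂ hv₀ hsin₀)⟩
end

section
/- Let ξ: ℝ → ℝ be a nonconstant C² solution of ξ'' + β·ξ' - sin(2ξ) = 0 with β > 0, and suppose ξ(s₀) = m·π and ξ'(s₀) ≠ 0 for some integer m. Then ξ(s) tends monotonically to +∞ or to -∞ as s → -∞ (the sign matching the sign of ξ'(s₀)). -/
open Real Filter Set

/-!
Along a solution the energy `E = ξ'² / 2 - sin² ξ` satisfies `E' = -β ξ'² ≤ 0`. At a zero of
`sin ξ` we get `ξ'(s)² ≥ ξ'(s₀)² > 0` for every `s ≤ s₀`, so `ξ'` keeps its sign and stays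
at least `|ξ'(s₀)|` in absolute value on `(-∞, s₀]`; by the mean value theorem `ξ` is monotone
there and diverges at least linearly as `s → -∞`. The case `ξ'(s₀) < 0` reduces to
`ξ'(s₀) > 0` through the symmetry `ξ ↦ -ξ` of the equation.
-/

section MeanValue

variable {f : ℝ → ℝ} {a s₀ : ℝ}

lemma le_on_Iic_of_sq_le {g : ℝ → ℝ} (hg : Continuous g) (hpos : 0 < g s₀)
    (hsq : ∀ s ≤ s₀, g s₀ ^ 2 ≤ g s ^ 2) : ∀ s ≤ s₀, g s₀ ≤ g s := by
  intro s hs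
  have hgs : 0 < g s := by
    by_contra! hneg
    obtain ⟨t, ht, hzero⟩ := intermediate_value_Icc hs hg.continuousOn ⟨hneg, hpos.le⟩
    nlinarith [hsq t ht.2]
  nlinarith [hsq s hs]

lemma mul_sub_le_sub_of_le_deriv_on_Iic (hf : Differentiable ℝ f)
    (hderiv : ∀ s ≤ s₀, a ≤ deriv f s) {x y : ℝ} (hy : y ≤ s₀) (hxy : x ≤ y) :
    a * (y - x) ≤ f y - f x :=
  (convex_Iic s₀).mul_sub_le_image_sub_of_le_deriv hf.continuous.continuousOn
    hf.differentiableOn (fun s hs => hderiv s (interior_subset hs : s ∈ Iic s₀))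
    x (hxy.trans hy) y hy hxy

lemma monotoneOn_Iic_of_pos_le_deriv (hf : Differentiable ℝ f) (ha : 0 < a)
    (hderiv : ∀ s ≤ s₀, a ≤ deriv f s) : MonotoneOn f (Iic s₀) := fun x _ y hy hxy => by
  nlinarith [mul_sub_le_sub_of_le_deriv_on_Iic hf hderiv hy hxy]

lemma tendsto_atBot_of_pos_le_deriv_on_Iic (hf : Differentiable ℝ f) (ha : 0 < a)
    (hderiv : ∀ s ≤ s₀, a ≤ deriv f s) : Tendsto f atBot atBot := by
  have hlin : Tendsto (fun s => f s₀ + a * (s - s₀)) atBot atBot :=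
    tendsto_atBot_add_const_left _ _
      ((tendsto_atBot_add_const_right _ _ tendsto_id).const_mul_atBot ha)
  refine tendsto_atBot_mono' _ ?_ hlin
  filter_upwards [eventually_le_atBot s₀] with s hs
  linarith [mul_sub_le_sub_of_le_deriv_on_Iic hf hderiv le_rfl hs]

end MeanValue

section DampedPendulum

def SolvesDampedPendulum (β : ℝ) (ξ : ℝ → ℝ) : Prop :=
  ∀ s, deriv (deriv ξ) s + β * deriv ξ s - sin (2 * ξ s) = 0

variable {β : ℝ} {ξ : ℝ → ℝ}

noncomputable def pendulumEnergy (ξ : ℝ → ℝ) (s : ℝ) : ℝ :=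
  deriv ξ s ^ 2 / 2 - sin (ξ s) ^ 2

lemma hasDerivAt_pendulumEnergy (hξ : Differentiable ℝ ξ) (hξ' : Differentiable ℝ (deriv ξ))
    (hode : SolvesDampedPendulum β ξ) (s : ℝ) :
    HasDerivAt (pendulumEnergy ξ) (-(β * deriv ξ s ^ 2)) s := by
  have hsin := (hasDerivAt_sin (ξ s)).comp s (hξ s).hasDerivAt
  refine ((((hξ' s).hasDerivAt.pow 2).div_const 2).sub (hsin.pow 2)).congr_deriv ?_
  have h := hode s
  rw [sin_two_mul] at h
  simp only [Function.comp_apply, Nat.cast_ofNat]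
  linear_combination deriv ξ s * h

lemma antitone_pendulumEnergy (hβ : 0 ≤ β) (hξ : Differentiable ℝ ξ)
    (hξ' : Differentiable ℝ (deriv ξ)) (hode : SolvesDampedPendulum β ξ) :
    Antitone (pendulumEnergy ξ) :=
  antitone_of_hasDerivAt_nonpos (hasDerivAt_pendulumEnergy hξ hξ' hode)
    fun s => neg_nonpos.mpr (by positivity)

lemma monotoneOn_Iic_and_tendsto_atBot_of_sin_eq_zero (hβ : 0 ≤ β)
    (hξ : Differentiable ℝ ξ) (hξ' : Differentiable ℝ (deriv ξ))
    (hode : SolvesDampedPendulum β ξ) {s₀ : ℝ}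
    (hsin : sin (ξ s₀) = 0) (ha : 0 < deriv ξ s₀) :
    MonotoneOn ξ (Iic s₀) ∧ Tendsto ξ atBot atBot := by
  have hsq : ∀ s ≤ s₀, deriv ξ s₀ ^ 2 ≤ deriv ξ s ^ 2 := fun s hs => by
    have h := antitone_pendulumEnergy hβ hξ hξ' hode hs
    simp only [pendulumEnergy, hsin] at h
    nlinarith [sq_nonneg (sin (ξ s))]
  have hderiv := le_on_Iic_of_sq_le hξ'.continuous ha hsq
  exact ⟨monotoneOn_Iic_of_pos_le_deriv hξ ha hderiv,
    tendsto_atBot_of_pos_le_deriv_on_Iic hξ ha hderiv⟩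

lemma SolvesDampedPendulum.neg (hode : SolvesDampedPendulum β ξ) :
    SolvesDampedPendulum β (-ξ) := fun s => by
  rw [deriv.neg', ← Pi.neg_def, deriv.neg']
  simp only [Pi.neg_apply, mul_neg, sin_neg]
  linear_combination -hode s

end DampedPendulum

theorem stmt_2_general (β : ℝ) (hβ : 0 < β) (ξ : ℝ → ℝ) (hξ : ContDiff ℝ 2 ξ)
    (hode : ∀ s, deriv (deriv ξ) s + β * deriv ξ s - Real.sin (2 * ξ s) = 0)
    (m : ℤ) (s₀ : ℝ) (hm : ξ s₀ = m * Real.pi) :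
    (0 < deriv ξ s₀ → MonotoneOn ξ (Set.Iic s₀) ∧ Tendsto ξ atBot atBot) ∧
    (deriv ξ s₀ < 0 → AntitoneOn ξ (Set.Iic s₀) ∧ Tendsto ξ atBot atTop) := by
  have hd : Differentiable ℝ ξ := hξ.differentiable (by norm_num)
  have hd' : Differentiable ℝ (deriv ξ) := by
    simpa using hξ.differentiable_iteratedDeriv 1 (by norm_num)
  have hsol : SolvesDampedPendulum β ξ := hode
  have hsin : sin (ξ s₀) = 0 := by rw [hm]; exact sin_int_mul_pi m
  refine ⟨monotoneOn_Iic_and_tendsto_atBot_of_sin_eq_zero hβ.le hd hd' hsol hsin, fun hneg => ?_⟩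
  have hnd' : Differentiable ℝ (deriv (-ξ)) := by rw [deriv.neg']; exact hd'.neg
  obtain ⟨hmono, htend⟩ := monotoneOn_Iic_and_tendsto_atBot_of_sin_eq_zero hβ.le hd.neg hnd'
    hsol.neg (by simpa using hsin) (by simpa [deriv.neg'] using hneg)
  exact ⟨by simpa using hmono.neg,
    by simpa [Function.comp_def] using tendsto_neg_atBot_atTop.comp htend⟩

/-- For a nonconstant C² solution of ξ'' + β·ξ' - sin(2ξ) = 0 with β > 0,
if ξ(s₀) = mπ and ξ'(s₀) ≠ 0, then ξ tends monotonically to +∞ or -∞ as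
s → -∞, the sign matching the sign of ξ'(s₀). -/
theorem stmt_2 (β : ℝ) (hβ : 0 < β) (ξ : ℝ → ℝ) (hξ : ContDiff ℝ 2 ξ)
    (hode : ∀ s, deriv (deriv ξ) s + β * deriv ξ s - Real.sin (2 * ξ s) = 0)
    (hnc : ¬ ∃ c : ℝ, ∀ s, ξ s = c)
    (m : ℤ) (s₀ : ℝ) (hm : ξ s₀ = m * Real.pi) (ha : deriv ξ s₀ ≠ 0) :
    (0 < deriv ξ s₀ → MonotoneOn ξ (Set.Iic s₀) ∧ Tendsto ξ atBot atBot) ∧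
    (deriv ξ s₀ < 0 → AntitoneOn ξ (Set.Iic s₀) ∧ Tendsto ξ atBot atTop) :=
  stmt_2_general β hβ ξ hξ hode m s₀ hm
end

section
/- Let ξ: ℝ → ℝ be a C² solution of ξ'' + β·ξ' - sin(2ξ) = 0 with β > 0 such that ξ(s) → m·π and ξ'(s) → 0 as s → -∞ for some integer m. Then ξ(s) never attains the values (m-1)·π or (m+1)·π for any s ∈ ℝ; in particular there is no such solution connecting m·π at s = -∞ to (m±1)·π at s = +∞. -/
/-!
Along a solution the energy `E = ξ'² / 2 - sin² ξ` satisfies `E' = -β ξ'² ≤ 0`, and the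
boundary condition at `-∞` gives `E → 0`, so `E ≤ 0` everywhere. At a point where `ξ = kπ` we
have `E = ξ'² / 2 ≥ 0`, hence `E = 0` there and, by monotonicity, on the whole half-line to its
left. Then `ξ' = 0` on that half-line, so `ξ` is constant there and equal to its limit `mπ`;
thus `k = m`.
-/

open Real Filter Topology Set

theorem eq_of_tendsto_atBot_of_deriv_eq_zero {G : Type*} [NormedAddCommGroup G]
    [NormedSpace ℝ G] {f : ℝ → G} {b : ℝ} {c : G} (hf : Differentiable ℝ f)
    (hderiv : ∀ x < b, deriv f x = 0) (hlim : Tendsto f atBot (𝓝 c)) : f b = c := by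
  obtain ⟨a, ha⟩ := isOpen_Iio.exists_is_const_of_deriv_eq_zero isPreconnected_Iio
    hf.differentiableOn fun x hx => hderiv x hx
  have hac : a = c := tendsto_nhds_unique
    (tendsto_const_nhds.congr' <| (eventually_lt_atBot b).mono fun x hx => (ha x hx).symm) hlim
  subst hac
  exact tendsto_nhds_unique ((hf b).continuousAt.continuousWithinAt (s := Iio b))
    (tendsto_const_nhds.congr' <| eventually_nhdsWithin_of_forall fun x hx => (ha x hx).symm)

namespace WindingODE

noncomputable def energy (ξ : ℝ → ℝ) (s : ℝ) : ℝ := deriv ξ s ^ 2 / 2 - sin (ξ s) ^ 2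

variable {β : ℝ} {ξ : ℝ → ℝ}

theorem hasDerivAt_energy (hξ : ContDiff ℝ 2 ξ)
    (hode : ∀ s, deriv (deriv ξ) s + β * deriv ξ s - sin (2 * ξ s) = 0) (s : ℝ) :
    HasDerivAt (energy ξ) (-β * deriv ξ s ^ 2) s := by
  have hξ' : HasDerivAt ξ (deriv ξ s) s := (hξ.differentiable two_ne_zero s).hasDerivAt
  have hξ'' : HasDerivAt (deriv ξ) (deriv (deriv ξ) s) s :=
    (hξ.differentiable_deriv_two s).hasDerivAt
  have hsin : HasDerivAt (fun t => sin (ξ t)) (cos (ξ s) * deriv ξ s) s :=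
    (hasDerivAt_sin (ξ s)).comp s hξ'
  have hode_s := hode s
  rw [sin_two_mul] at hode_s
  exact ((hξ''.pow 2).div_const 2 |>.sub (hsin.pow 2)).congr_deriv
    (by linear_combination deriv ξ s * hode_s)

theorem antitone_energy (hβ : 0 ≤ β) (hξ : ContDiff ℝ 2 ξ)
    (hode : ∀ s, deriv (deriv ξ) s + β * deriv ξ s - sin (2 * ξ s) = 0) :
    Antitone (energy ξ) :=
  antitone_of_deriv_nonpos (fun s => (hasDerivAt_energy hξ hode s).differentiableAt) fun s => by
    rw [(hasDerivAt_energy hξ hode s).deriv, neg_mul]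
    exact neg_nonpos.mpr (by positivity)

theorem tendsto_energy_atBot (m : ℤ) (hlim : Tendsto ξ atBot (𝓝 (m * π)))
    (hlim' : Tendsto (deriv ξ) atBot (𝓝 0)) : Tendsto (energy ξ) atBot (𝓝 0) := by
  have hsin : Tendsto (sin ∘ ξ) atBot (𝓝 0) := by
    simpa only [sin_int_mul_pi] using (continuous_sin.tendsto _).comp hlim
  unfold energy
  simpa using ((hlim'.pow 2).div_const 2).sub (hsin.pow 2)

theorem eq_of_apply_eq_int_mul_pi (hβ : 0 < β) (hξ : ContDiff ℝ 2 ξ)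
    (hode : ∀ s, deriv (deriv ξ) s + β * deriv ξ s - sin (2 * ξ s) = 0) {m : ℤ}
    (hlim : Tendsto ξ atBot (𝓝 (m * π))) (hlim' : Tendsto (deriv ξ) atBot (𝓝 0))
    {s : ℝ} {k : ℤ} (hk : ξ s = k * π) : k = m := by
  have hanti := antitone_energy hβ.le hξ hode
  have hnonpos : ∀ t, energy ξ t ≤ 0 := hanti.ge_of_tendsto (tendsto_energy_atBot m hlim hlim')
  have hzero : energy ξ s = 0 := le_antisymm (hnonpos s) <| by
    rw [energy, hk, sin_int_mul_pi, zero_pow two_ne_zero, sub_zero]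
    positivity
  have hderiv : ∀ t < s, deriv ξ t = 0 := by
    intro t ht
    have hconst : energy ξ =ᶠ[𝓝 t] fun _ => 0 := eventually_of_mem (Iio_mem_nhds ht)
      fun x hx => le_antisymm (hnonpos x) (hzero ▸ hanti (le_of_lt hx))
    have hE' : -β * deriv ξ t ^ 2 = 0 := by
      rw [← (hasDerivAt_energy hξ hode t).deriv, hconst.deriv_eq, deriv_const]
    simpa [hβ.ne'] using hE'
  have hξs := eq_of_tendsto_atBot_of_deriv_eq_zero (hξ.differentiable two_ne_zero) hderiv hlim
  exact_mod_cast mul_right_cancel₀ pi_ne_zero (hk.symm.trans hξs)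

end WindingODE

open WindingODE

/-- A C² solution of ξ'' + β·ξ' - sin(2ξ) = 0 with β > 0 satisfying
ξ(s) → mπ and ξ'(s) → 0 as s → -∞ never attains the values (m-1)π or (m+1)π:
nonexistence of static winding solutions. -/
theorem stmt_4 (β : ℝ) (hβ : 0 < β) (ξ : ℝ → ℝ) (hξ : ContDiff ℝ 2 ξ)
    (hode : ∀ s, deriv (deriv ξ) s + β * deriv ξ s - Real.sin (2 * ξ s) = 0)
    (m : ℤ)
    (hlim : Tendsto ξ atBot (nhds (m * Real.pi)))
    (hlim' : Tendsto (deriv ξ) atBot (nhds 0)) :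
    ∀ s : ℝ, ξ s ≠ (m - 1) * Real.pi ∧ ξ s ≠ (m + 1) * Real.pi := by
  intro s
  constructor
  · intro h
    have := eq_of_apply_eq_int_mul_pi hβ hξ hode hlim hlim' (k := m - 1) (by push_cast; exact h)
    omega
  · intro h
    have := eq_of_apply_eq_int_mul_pi hβ hξ hode hlim hlim' (k := m + 1) (by push_cast; exact h)
    omega
end

section
/- Suppose ξ is analytic near r = 0, solves r²·ξ'' + 2r·ξ' - (k(k+1)/2)·sin(2ξ) = 0 for a positive integer k, and ξ(0) = (2m+1)·π/2 for some integer m (so cos(2ξ(0)) = -1). Then ξ is constant on a neighborhood of 0. -/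
/-!
Unless `ξ` is locally constant, `ξ r = ξ 0 + r ^ (n + 1) h r` with `h 0 ≠ 0`. Since `2 ξ 0` is an
odd multiple of `π`, `sin (2 ξ) = -sin (2 r ^ (n + 1) h)`, while `r² ξ'' + 2 r ξ' = (r² ξ')'` is
`(n + 1)(n + 2) h 0 r ^ (n + 1) + o(r ^ (n + 1))`. Comparing the coefficients of `r ^ (n + 1)` gives
`((n + 1)(n + 2) + k (k + 1)) h 0 = 0`, which is impossible.
-/

open Real Filter Topology

section

variable {𝕜 : Type*} [NontriviallyNormedField 𝕜]

lemma AnalyticAt.eventually_eq_const_or_eq_add_pow_succ_mul {f : 𝕜 → 𝕜} {z₀ : 𝕜}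
    (hf : AnalyticAt 𝕜 f z₀) :
    (∀ᶠ z in 𝓝 z₀, f z = f z₀) ∨ ∃ (n : ℕ) (h : 𝕜 → 𝕜), AnalyticAt 𝕜 h z₀ ∧ h z₀ ≠ 0 ∧
      f =ᶠ[𝓝 z₀] fun z => f z₀ + (z - z₀) ^ (n + 1) * h z := by
  by_cases hconst : ∀ᶠ z in 𝓝 z₀, f z - f z₀ = 0
  · exact .inl (hconst.mono fun z hz => sub_eq_zero.mp hz)
  obtain ⟨n, h, hh, hh0, hfh⟩ :=
    (hf.sub analyticAt_const).exists_eventuallyEq_pow_smul_nonzero_iff.mpr hconst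
  obtain ⟨n, rfl⟩ : ∃ m, n = m + 1 := by
    refine Nat.exists_eq_add_one.mpr (Nat.pos_of_ne_zero fun hn => hh0 ?_)
    simpa [hn] using hfh.self_of_nhds.symm
  exact .inr ⟨n, h, hh, hh0, hfh.mono fun z hz => by simpa [sub_eq_iff_eq_add'] using hz⟩

lemma deriv_pow_succ_mul {h : 𝕜 → 𝕜} {z : 𝕜} (hh : DifferentiableAt 𝕜 h z) (n : ℕ) :
    deriv (fun x => x ^ (n + 1) * h x) z = z ^ n * ((n + 1) * h z + z * deriv h z) := by
  rw [deriv_fun_mul (differentiableAt_pow _) hh, deriv_pow_field]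
  push_cast
  ring

lemma deriv_sq_mul_deriv {f : 𝕜 → 𝕜} {z : 𝕜} (hf : DifferentiableAt 𝕜 (deriv f) z) :
    deriv (fun x => x ^ 2 * deriv f x) z = z ^ 2 * deriv (deriv f) z + 2 * z * deriv f z := by
  rw [deriv_fun_mul (differentiableAt_pow _) hf, deriv_pow_field]
  push_cast
  ring

variable [CompleteSpace 𝕜]

lemma deriv_eventuallyEq_pow_mul {f h : 𝕜 → 𝕜} {c : 𝕜} (n : ℕ) (hh : AnalyticAt 𝕜 h 0)
    (hf : f =ᶠ[𝓝 0] fun z => c + z ^ (n + 1) * h z) :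
    deriv f =ᶠ[𝓝 0] fun z => z ^ n * ((n + 1) * h z + z * deriv h z) := by
  filter_upwards [hf.deriv, hh.eventually_analyticAt] with z hfz hhz
  rw [hfz, deriv_const_add, deriv_pow_succ_mul hhz.differentiableAt]

lemma exists_euler_eq_pow_succ_mul {f h : 𝕜 → 𝕜} (n : ℕ) (hh : AnalyticAt 𝕜 h 0)
    (hf : f =ᶠ[𝓝 0] fun z => f 0 + z ^ (n + 1) * h z) :
    ∃ A : 𝕜 → 𝕜, ContinuousAt A 0 ∧ A 0 = (n + 1) * (n + 2) * h 0 ∧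
      ∀ᶠ z in 𝓝 0, z ^ 2 * deriv (deriv f) z + 2 * z * deriv f z = z ^ (n + 1) * A z := by
  set w : 𝕜 → 𝕜 := fun z => (n + 1) * h z + z * deriv h z
  have hw : AnalyticAt 𝕜 w 0 := by fun_prop
  have hu : (fun z => z ^ 2 * deriv f z) =ᶠ[𝓝 0] fun z => 0 + z ^ (n + 1 + 1) * w z := by
    filter_upwards [deriv_eventuallyEq_pow_mul n hh hf] with z hz
    rw [hz]
    ring
  have hfa : AnalyticAt 𝕜 f 0 := AnalyticAt.congr (by fun_prop) hf.symm
  refine ⟨fun z => (n + 1 + 1) * w z + z * deriv w z, by fun_prop, by simp [w]; ring, ?_⟩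
  filter_upwards [deriv_eventuallyEq_pow_mul (n + 1) hw hu, hfa.eventually_analyticAt]
    with z hz hfz
  rw [← deriv_sq_mul_deriv hfz.deriv.differentiableAt, hz]
  push_cast
  ring

end

lemma Real.mul_sinc (x : ℝ) : x * sinc x = sin x := by
  rcases eq_or_ne x 0 with rfl | hx
  · simp
  · rw [sinc_of_ne_zero hx, mul_div_cancel₀ _ hx]

lemma eq_mul_of_eventually_pow_succ_mul_eq_mul_sin {A B : ℝ → ℝ} {c : ℝ} (n : ℕ)
    (hA : ContinuousAt A 0) (hB : ContinuousAt B 0)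
    (h : ∀ᶠ r in 𝓝 0, r ^ (n + 1) * A r = c * sin (r ^ (n + 1) * B r)) :
    A 0 = c * B 0 := by
  have hA_eq : A =ᶠ[𝓝 0] fun r => c * B r * sinc (r ^ (n + 1) * B r) := by
    rw [← hA.eventuallyEq_nhds_iff_eventuallyEq_nhdsNE (by fun_prop)]
    filter_upwards [nhdsWithin_le_nhds h, self_mem_nhdsWithin] with r hr hr0
    refine mul_left_cancel₀ (pow_ne_zero (n + 1) hr0) ?_
    rw [hr, ← mul_sinc]
    ring
  simpa using hA_eq.self_of_nhds

theorem stmt_7_general (k : ℕ) (ξ : ℝ → ℝ) (hξ : AnalyticAt ℝ ξ 0)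
    (hode : ∀ᶠ r in nhds (0 : ℝ),
      r^2 * deriv (deriv ξ) r + 2 * r * deriv ξ r
        - ((k : ℝ) * (k + 1) / 2) * Real.sin (2 * ξ r) = 0)
    (m : ℤ) (h0 : ξ 0 = (2 * m + 1) * Real.pi / 2) :
    ∀ᶠ r in nhds (0 : ℝ), ξ r = ξ 0 := by
  obtain hconst | ⟨n, h, hh, hh0, hξh⟩ := hξ.eventually_eq_const_or_eq_add_pow_succ_mul
  · exact hconst
  simp only [sub_zero] at hξh
  obtain ⟨A, hA, hA0, hA_eq⟩ := exists_euler_eq_pow_succ_mul n hh hξh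
  have hsin : ∀ᶠ r in 𝓝 0,
      r ^ (n + 1) * A r = -(k * (k + 1) / 2) * sin (r ^ (n + 1) * (2 * h r)) := by
    filter_upwards [hode, hA_eq, hξh] with r hr hrA hrξ
    have h2ξ : 2 * ξ r = r ^ (n + 1) * (2 * h r) + π + m * (2 * π) := by
      rw [hrξ, h0]
      ring
    rw [h2ξ, sin_add_int_mul_two_pi, sin_add_pi] at hr
    linarith
  have hA0' := eq_mul_of_eventually_pow_succ_mul_eq_mul_sin n hA (by fun_prop) hsin
  have hpos : (0 : ℝ) < (n + 1) * (n + 2) + k * (k + 1) := by positivity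
  have hzero : h 0 * ((n + 1) * (n + 2) + k * (k + 1)) = 0 := by
    linear_combination hA0' - hA0
  exact absurd ((mul_eq_zero.mp hzero).resolve_right hpos.ne') hh0

/-- If ξ is analytic near 0, solves the static texture equation near 0, and
ξ(0) = (2m+1)π/2 for some integer m, then ξ is constant near 0. -/
theorem stmt_7 (k : ℕ) (hk : 0 < k) (ξ : ℝ → ℝ) (hξ : AnalyticAt ℝ ξ 0)
    (hode : ∀ᶠ r in nhds (0 : ℝ),
      r^2 * deriv (deriv ξ) r + 2 * r * deriv ξ r
        - ((k : ℝ) * (k + 1) / 2) * Real.sin (2 * ξ r) = 0)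
    (m : ℤ) (h0 : ξ 0 = (2 * m + 1) * Real.pi / 2) :
    ∀ᶠ r in nhds (0 : ℝ), ξ r = ξ 0 :=
  stmt_7_general k ξ hξ hode m h0
end

section
/- Every C² solution of ξ'' + β·ξ' - sin(2ξ) = 0 with β > 0 satisfying lim_{s→-∞} ξ(s) = mπ (m ∈ ℤ) and lim_{s→-∞} ξ'(s) = 0 is bounded on all of ℝ: there is a constant 0 < c < π such that ξ(s) ∈ [mπ - c, mπ + c] for all s. -/
/-!
The energy `E = ξ'² / 2 - sin² ξ` satisfies `E' = -β ξ'² ≤ 0` and tends to `0` at `-∞`, so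
`E ≤ 0`. If `E` vanished at some `s₀`, it would vanish on `(-∞, s₀]`, forcing `ξ' = 0` there and
hence `ξ(s₀) = mπ`. So `ξ` never reaches `(m ± 1)π`, where `sin ξ = 0` would give `E ≥ 0`.
Once `E(s₀) < 0`, the bound `sin² ξ ≥ -E(s₀)` keeps `ξ` uniformly away from `(m ± 1)π` for
`s ≥ s₀`; near `-∞` the function `ξ` is close to `mπ`, and compactness handles the rest.
-/

open Real Filter Topology Set

theorem Continuous.exists_ge_lt_forall_le_of_eventually_cocompact_le {β α : Type*}
    [TopologicalSpace β] [Nonempty β] [LinearOrder α] [TopologicalSpace α]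
    [OrderClosedTopology α] {f : β → α} (hf : Continuous f) {a b : α} (hb : b < a)
    (hfa : ∀ x, f x < a) (hcc : ∀ᶠ x in cocompact β, f x ≤ b) :
    ∃ c, b ≤ c ∧ c < a ∧ ∀ x, f x ≤ c := by
  obtain ⟨x, hx⟩ := (hf.max continuous_const).exists_forall_ge' (Classical.arbitrary β)
    (hcc.mono fun y hy => (max_eq_right hy).trans_le (le_max_right _ _))
  exact ⟨max (f x) b, le_max_right _ _, max_lt (hfa x) hb, fun y => (le_max_left _ _).trans (hx y)⟩

theorem abs_sin_le_pi_sub_abs_sub_int_mul_pi {x : ℝ} {m : ℤ} (hx : |x - m * π| ≤ π) :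
    |sin x| ≤ π - |x - m * π| := by
  calc |sin x| = |sin (x - m * π)| := by
        rw [sin_sub_int_mul_pi, abs_mul, abs_zpow, abs_neg, abs_one, one_zpow, one_mul]
    _ = sin (π - |x - m * π|) := by rw [abs_sin_eq_sin_abs_of_abs_le_pi hx, sin_pi_sub]
    _ ≤ π - |x - m * π| := sin_le (by linarith)

namespace DampedPendulum

variable {β : ℝ} {ξ : ℝ → ℝ} {m : ℤ}

noncomputable def energy (ξ : ℝ → ℝ) (s : ℝ) : ℝ := deriv ξ s ^ 2 / 2 - sin (ξ s) ^ 2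

theorem hasDerivAt_energy (hξ : ContDiff ℝ 2 ξ) {s : ℝ}
    (hode : deriv (deriv ξ) s + β * deriv ξ s - sin (2 * ξ s) = 0) :
    HasDerivAt (energy ξ) (-β * deriv ξ s ^ 2) s := by
  have hξ' : HasDerivAt ξ (deriv ξ s) s := (hξ.differentiable (by norm_num) s).hasDerivAt
  have hξ'' : HasDerivAt (deriv ξ) (deriv (deriv ξ) s) s :=
    ((hξ.iterate_deriv' 1 1).differentiable (by norm_num) s).hasDerivAt
  refine (((hξ''.pow 2).div_const 2).sub
    (((hasDerivAt_sin (ξ s)).comp s hξ').pow 2)).congr_deriv ?_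
  rw [sin_two_mul] at hode
  simp only [Function.comp_apply]
  linear_combination deriv ξ s * hode

theorem antitone_energy (hβ : 0 ≤ β)
    (hE : ∀ s, HasDerivAt (energy ξ) (-β * deriv ξ s ^ 2) s) : Antitone (energy ξ) :=
  antitone_of_hasDerivAt_nonpos (f' := fun s => -β * deriv ξ s ^ 2) hE fun _ =>
    mul_nonpos_of_nonpos_of_nonneg (neg_nonpos.2 hβ) (sq_nonneg _)

theorem tendsto_energy_atBot (hlim : Tendsto ξ atBot (𝓝 (m * π)))
    (hlim' : Tendsto (deriv ξ) atBot (𝓝 0)) : Tendsto (energy ξ) atBot (𝓝 0) := by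
  have hsin : Tendsto (fun s => sin (ξ s)) atBot (𝓝 0) := by
    simpa [sin_int_mul_pi, Function.comp_def] using (continuous_sin.tendsto _).comp hlim
  have h := ((hlim'.pow 2).div_const 2).sub (hsin.pow 2)
  norm_num at h
  exact h

theorem energy_nonpos (hβ : 0 ≤ β) (hE : ∀ s, HasDerivAt (energy ξ) (-β * deriv ξ s ^ 2) s)
    (hlim : Tendsto ξ atBot (𝓝 (m * π))) (hlim' : Tendsto (deriv ξ) atBot (𝓝 0)) (s : ℝ) :
    energy ξ s ≤ 0 :=
  (antitone_energy hβ hE).ge_of_tendsto (tendsto_energy_atBot hlim hlim') s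

theorem eq_int_mul_pi_of_energy_eq_zero (hβ : 0 < β) (hd : Differentiable ℝ ξ)
    (hE : ∀ s, HasDerivAt (energy ξ) (-β * deriv ξ s ^ 2) s)
    (hlim : Tendsto ξ atBot (𝓝 (m * π))) (hlim' : Tendsto (deriv ξ) atBot (𝓝 0))
    {s₀ : ℝ} (hs₀ : energy ξ s₀ = 0) : ξ s₀ = m * π := by
  have hzero : ∀ t ≤ s₀, energy ξ t = 0 := fun t ht =>
    le_antisymm (energy_nonpos hβ.le hE hlim hlim' t) (hs₀ ▸ antitone_energy hβ.le hE ht)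
  have hderiv : ∀ t < s₀, HasDerivAt ξ 0 t := by
    intro t ht
    have hloc : energy ξ =ᶠ[𝓝 t] fun _ => 0 :=
      eventually_of_mem (Iio_mem_nhds ht) fun u hu => hzero u hu.le
    have h := (hE t).unique ((hasDerivAt_const t (0 : ℝ)).congr_of_eventuallyEq hloc)
    have hξ' : deriv ξ t = 0 := by simpa [hβ.ne'] using h
    exact hξ' ▸ (hd t).hasDerivAt
  have hconst : ∀ t ≤ s₀, ξ t = ξ s₀ := fun t ht =>
    (constant_of_has_deriv_right_zero hd.continuous.continuousOn
      (fun x hx => (hderiv x hx.2).hasDerivWithinAt) s₀ ⟨ht, le_rfl⟩).symm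
  exact tendsto_nhds_unique
    (tendsto_const_nhds.congr' (eventually_atBot.2 ⟨s₀, fun t ht => (hconst t ht).symm⟩)) hlim

theorem abs_sub_int_mul_pi_lt_pi (hβ : 0 < β) (hd : Differentiable ℝ ξ)
    (hE : ∀ s, HasDerivAt (energy ξ) (-β * deriv ξ s ^ 2) s)
    (hlim : Tendsto ξ atBot (𝓝 (m * π))) (hlim' : Tendsto (deriv ξ) atBot (𝓝 0)) (s : ℝ) :
    |ξ s - m * π| < π := by
  by_contra! hs
  have hnear : ∀ᶠ t in atBot, |ξ t - m * π| < π := by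
    simpa [Real.dist_eq] using Metric.tendsto_nhds.mp hlim π pi_pos
  obtain ⟨t, htπ, hts⟩ := (hnear.and (eventually_le_atBot s)).exists
  obtain ⟨s₀, -, hs₀ : |ξ s₀ - m * π| = π⟩ := intermediate_value_Icc hts
    (hd.continuous.sub continuous_const).abs.continuousOn ⟨htπ.le, hs⟩
  have hsin : sin (ξ s₀) = 0 := by
    have h := abs_sin_le_pi_sub_abs_sub_int_mul_pi hs₀.le
    rw [hs₀, sub_self] at h
    exact abs_nonpos_iff.mp h
  have hE₀ : energy ξ s₀ = 0 := by
    refine le_antisymm (energy_nonpos hβ.le hE hlim hlim' s₀) ?_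
    norm_num [energy, hsin]
    positivity
  have := eq_int_mul_pi_of_energy_eq_zero hβ hd hE hlim hlim' hE₀
  rw [this, sub_self, abs_zero] at hs₀
  exact pi_pos.ne hs₀

theorem exists_lt_pi_eventually_abs_sub_int_mul_pi_le (hβ : 0 < β) (hd : Differentiable ℝ ξ)
    (hE : ∀ s, HasDerivAt (energy ξ) (-β * deriv ξ s ^ 2) s)
    (hlim : Tendsto ξ atBot (𝓝 (m * π))) (hlim' : Tendsto (deriv ξ) atBot (𝓝 0)) :
    ∃ b < π, ∀ᶠ s in atTop, |ξ s - m * π| ≤ b := by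
  by_cases hneg : ∃ s₀, energy ξ s₀ < 0
  · obtain ⟨s₀, hs₀⟩ := hneg
    refine ⟨π + energy ξ s₀, by linarith, eventually_atTop.2 ⟨s₀, fun s hs => ?_⟩⟩
    have hsin : -energy ξ s₀ ≤ sin (ξ s) ^ 2 := by
      have h := antitone_energy hβ.le hE hs
      simp only [energy] at h ⊢
      nlinarith [sq_nonneg (deriv ξ s)]
    have hsq : sin (ξ s) ^ 2 ≤ |sin (ξ s)| := by
      rw [← sq_abs]
      exact pow_le_of_le_one (abs_nonneg _) (abs_sin_le_one _) two_ne_zero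
    have := abs_sin_le_pi_sub_abs_sub_int_mul_pi
      (abs_sub_int_mul_pi_lt_pi hβ hd hE hlim hlim' s).le
    linarith
  · simp only [not_exists, not_lt] at hneg
    refine ⟨0, pi_pos, Eventually.of_forall fun s => ?_⟩
    have hs := le_antisymm (energy_nonpos hβ.le hE hlim hlim' s) (hneg s)
    simp [eq_int_mul_pi_of_energy_eq_zero hβ hd hE hlim hlim' hs]

end DampedPendulum

open DampedPendulum in
/-- Every C² solution of ξ'' + β·ξ' - sin(2ξ) = 0 with β > 0 satisfying
ξ → mπ and ξ' → 0 as s → -∞ is bounded: there is 0 < c < π with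
ξ(s) ∈ [mπ - c, mπ + c] for all s. -/
theorem stmt_15 (β : ℝ) (hβ : 0 < β) (ξ : ℝ → ℝ) (hξ : ContDiff ℝ 2 ξ)
    (hode : ∀ s, deriv (deriv ξ) s + β * deriv ξ s - Real.sin (2 * ξ s) = 0)
    (m : ℤ)
    (hlim : Tendsto ξ atBot (nhds (m * Real.pi)))
    (hlim' : Tendsto (deriv ξ) atBot (nhds 0)) :
    ∃ c : ℝ, 0 < c ∧ c < Real.pi ∧
      ∀ s, ξ s ∈ Set.Icc (m * Real.pi - c) (m * Real.pi + c) := by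
  have hd : Differentiable ℝ ξ := hξ.differentiable (by norm_num)
  have hE s := hasDerivAt_energy hξ (hode s)
  obtain ⟨b, hbπ, hb_top⟩ := exists_lt_pi_eventually_abs_sub_int_mul_pi_le hβ hd hE hlim hlim'
  have hb_bot : ∀ᶠ s in atBot, |ξ s - m * π| ≤ π / 2 := by
    simpa [Real.dist_eq] using (Metric.tendsto_nhds.mp hlim (π / 2) (by positivity)).mono
      fun _ h => h.le
  have hcc : ∀ᶠ s in cocompact ℝ, |ξ s - m * π| ≤ max b (π / 2) := by
    rw [cocompact_eq_atBot_atTop]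
    exact eventually_sup.2 ⟨hb_bot.mono fun _ h => h.trans (le_max_right _ _),
      hb_top.mono fun _ h => h.trans (le_max_left _ _)⟩
  obtain ⟨c, hbc, hcπ, hc⟩ :=
    (hd.continuous.sub continuous_const).abs.exists_ge_lt_forall_le_of_eventually_cocompact_le
      (max_lt hbπ (by linarith [pi_pos])) (abs_sub_int_mul_pi_lt_pi hβ hd hE hlim hlim') hcc
  refine ⟨c, by linarith [le_max_right b (π / 2), pi_pos], hcπ, fun s => ?_⟩
  exact mem_Icc_iff_abs_le.mp ((abs_sub_comm _ _).trans_le (hc s))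
end
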